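/- Let G be a finitely generated group that is not periodic, i.e., G^{ab} = G/G' contains an element of infinite order. Then the subgroup Δ̃(G) = ⟨[g,h^φ][h,g^φ] : g,h ∈ G⟩ of ν(G) contains an element of infinite order; namely, if x ∈ G maps to an element of infinite order in G^{ab}, then [x,x^φ]² has infinite order in ν(G). -/

import Mathlib

open Monoid
open scoped commutatorElement

/-- A pair of compatible (right) actions of groups `G` and `H` on each other,
in the sense of Brown–Loday.  `aGH g h` denotes `g ^ h` and `aHG h g` denotes `h ^ g`. -/
structure CompatibleActions (G H : Type*) [Group G] [Group H] where
  aGH : G → H → G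
  aHG : H → G → H
  aGH_one : ∀ g, aGH g 1 = g
  aGH_mul : ∀ g h₁ h₂, aGH g (h₁ * h₂) = aGH (aGH g h₁) h₂
  aGH_hom : ∀ g₁ g₂ h, aGH (g₁ * g₂) h = aGH g₁ h * aGH g₂ h
  aHG_one : ∀ h, aHG h 1 = h
  aHG_mul : ∀ h g₁ g₂, aHG h (g₁ * g₂) = aHG (aHG h g₁) g₂
  aHG_hom : ∀ h₁ h₂ g, aHG (h₁ * h₂) g = aHG h₁ g * aHG h₂ g
  compat₁ : ∀ g g₁ h, aGH g (aHG h g₁) = g₁⁻¹ * aGH (g₁ * g * g₁⁻¹) h * g₁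
  compat₂ : ∀ h h₁ g, aHG h (aGH g h₁) = h₁⁻¹ * aHG (h₁ * h * h₁⁻¹) g * h₁

variable {G H : Type*} [Group G] [Group H]

/-- Relators of the group `η(G,H)`:
`[g,h^φ]^{g₁} = [g^{g₁}, (h^{g₁})^φ]` and `[g,h^φ]^{h₁^φ} = [g^{h₁}, (h^{h₁})^φ]`. -/
def etaRels (c : CompatibleActions G H) : Set (Coprod G H) :=
  let iG : G →* Coprod G H := Coprod.inl
  let iH : H →* Coprod G H := Coprod.inr
  (Set.range fun p : G × G × H =>
    ((iG p.1)⁻¹ * ⁅iG p.2.1, iH p.2.2⁆ * iG p.1) *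
      ⁅iG (p.1⁻¹ * p.2.1 * p.1), iH (c.aHG p.2.2 p.1)⁆⁻¹) ∪
  (Set.range fun p : H × G × H =>
    ((iH p.1)⁻¹ * ⁅iG p.2.1, iH p.2.2⁆ * iH p.1) *
      ⁅iG (c.aGH p.2.1 p.1), iH (p.1⁻¹ * p.2.2 * p.1)⁆⁻¹)

/-- The Brown–Loday group `η(G,H)`. -/
def EtaGroup (c : CompatibleActions G H) : Type _ :=
  Coprod G H ⧸ Subgroup.normalClosure (etaRels c)

instance (c : CompatibleActions G H) : Group (EtaGroup c) :=
  QuotientGroup.Quotient.group _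

/-- The canonical map `G → η(G,H)`. -/
def etaG (c : CompatibleActions G H) : G →* EtaGroup c :=
  (QuotientGroup.mk' _).comp Coprod.inl

/-- The canonical map `H → η(G,H)`, `h ↦ h^φ`. -/
def etaH (c : CompatibleActions G H) : H →* EtaGroup c :=
  (QuotientGroup.mk' _).comp Coprod.inr

/-- The set of tensors `T⊗(G,H) = {[g, h^φ]} ⊆ η(G,H)`. -/
def tensorSet (c : CompatibleActions G H) : Set (EtaGroup c) :=
  {x | ∃ g h, x = ⁅etaG c g, etaH c h⁆}

/-- The non-abelian tensor product `[G, H^φ] ≤ η(G,H)`. -/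
def tensorSub (c : CompatibleActions G H) : Subgroup (EtaGroup c) :=
  Subgroup.closure (tensorSet c)

/-- The compatible pair of conjugation actions of `G` on itself, giving `ν(G) = η(G,G)`. -/
def conjActions (G : Type*) [Group G] : CompatibleActions G G where
  aGH g h := h⁻¹ * g * h
  aHG h g := g⁻¹ * h * g
  aGH_one := by intro g; group
  aGH_mul := by intros; group
  aGH_hom := by intros; group
  aHG_one := by intro h; group
  aHG_mul := by intros; group
  aHG_hom := by intros; group
  compat₁ := by intros; group
  compat₂ := by intros; group

/-- `ν(G)`. -/
abbrev NuGroup (G : Type*) [Group G] := EtaGroup (conjActions G)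

/-- A group is locally finite if all its finitely generated subgroups are finite. -/
def IsLocallyFiniteGroup (K : Type*) [Group K] : Prop :=
  ∀ S : Subgroup K, S.FG → Finite S

/-- The subgroup `Δ̃(K) = ⟨[g,h^φ][h,g^φ] : g, h ∈ K⟩ ≤ ν(K)`. -/
def deltaTilde (K : Type*) [Group K] : Subgroup (NuGroup K) :=
  Subgroup.closure {x | ∃ g h, x = ⁅etaG (conjActions K) g, etaH (conjActions K) h⁆ *
    ⁅etaG (conjActions K) h, etaH (conjActions K) g⁆}


/-! ### Auxiliary: the integer Heisenberg group -/

/-- Integer Heisenberg group. -/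
@[ext] structure Heis where
  a : ℤ
  b : ℤ
  c : ℤ

namespace Heis

instance : Mul Heis := ⟨fun p q => ⟨p.a + q.a, p.b + q.b, p.c + q.c + p.a * q.b⟩⟩
instance : One Heis := ⟨⟨0, 0, 0⟩⟩
instance : Inv Heis := ⟨fun p => ⟨-p.a, -p.b, p.a * p.b - p.c⟩⟩

@[simp] lemma mul_a (p q : Heis) : (p * q).a = p.a + q.a := rfl
@[simp] lemma mul_b (p q : Heis) : (p * q).b = p.b + q.b := rfl
@[simp] lemma mul_c (p q : Heis) : (p * q).c = p.c + q.c + p.a * q.b := rfl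
@[simp] lemma one_a : (1 : Heis).a = 0 := rfl
@[simp] lemma one_b : (1 : Heis).b = 0 := rfl
@[simp] lemma one_c : (1 : Heis).c = 0 := rfl
@[simp] lemma inv_a (p : Heis) : p⁻¹.a = -p.a := rfl
@[simp] lemma inv_b (p : Heis) : p⁻¹.b = -p.b := rfl
@[simp] lemma inv_c (p : Heis) : p⁻¹.c = p.a * p.b - p.c := rfl

instance : Group Heis where
  mul_assoc p q r := by ext <;> simp <;> ring
  one_mul p := by ext <;> simp
  mul_one p := by ext <;> simp
  inv_mul_cancel p := by ext <;> simp

lemma conjG (u w : ℤ) : ((⟨w, 0, 0⟩ : Heis))⁻¹ * ⟨u, 0, 0⟩ * ⟨w, 0, 0⟩ = ⟨u, 0, 0⟩ := by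
  ext <;> simp

lemma conjH (v w : ℤ) : ((⟨0, w, 0⟩ : Heis))⁻¹ * ⟨0, v, 0⟩ * ⟨0, w, 0⟩ = ⟨0, v, 0⟩ := by
  ext <;> simp

lemma comm_eq (u v : ℤ) : ⁅(⟨u, 0, 0⟩ : Heis), (⟨0, v, 0⟩ : Heis)⁆ = ⟨0, 0, u * v⟩ := by
  rw [commutatorElement_def]; ext <;> simp

lemma rel₁_eq (u v w u' v' : ℤ) (h1 : u' = u) (h2 : v' = v) :
    ((⟨w, 0, 0⟩ : Heis))⁻¹ * ⁅(⟨u, 0, 0⟩ : Heis), (⟨0, v, 0⟩ : Heis)⁆ * ⟨w, 0, 0⟩ *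
      ⁅(⟨u', 0, 0⟩ : Heis), (⟨0, v', 0⟩ : Heis)⁆⁻¹ = 1 := by
  subst h1 h2; rw [comm_eq]; ext <;> simp

lemma rel₂_eq (u v w u' v' : ℤ) (h1 : u' = u) (h2 : v' = v) :
    ((⟨0, w, 0⟩ : Heis))⁻¹ * ⁅(⟨u, 0, 0⟩ : Heis), (⟨0, v, 0⟩ : Heis)⁆ * ⟨0, w, 0⟩ *
      ⁅(⟨u', 0, 0⟩ : Heis), (⟨0, v', 0⟩ : Heis)⁆⁻¹ = 1 := by
  subst h1 h2; rw [comm_eq]; ext <;> simp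

lemma central_pow (m : ℤ) (n : ℕ) : (⟨0, 0, m⟩ : Heis) ^ n = ⟨0, 0, n * m⟩ := by
  induction n with
  | zero => ext <;> simp
  | succ k ih => rw [pow_succ, ih]; ext <;> simp; ring

lemma not_isOfFinOrder {m : ℤ} (hm : m ≠ 0) : ¬ IsOfFinOrder (⟨0, 0, m⟩ : Heis) := by
  rw [isOfFinOrder_iff_pow_eq_one]
  rintro ⟨n, hn, h⟩
  rw [central_pow] at h
  have := congrArg Heis.c h
  simp at this
  rcases this with h | h
  · omega
  · exact hm h

end Heis

/-- A finitely generated abelian group with an element of infinite order admits an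
integer character not vanishing on that element. -/
lemma exists_int_char {A : Type*} [CommGroup A] [Group.FG A] (a : A)
    (ha : ¬ IsOfFinOrder a) :
    ∃ ψ : Additive A →+ ℤ, ψ (Additive.ofMul a) ≠ 0 := by
  set M := Additive A
  haveI : AddGroup.FG M := AddGroup.fg_of_group_fg
  haveI : Module.Finite ℤ M := Module.Finite.iff_addGroup_fg.2 ‹_›
  set N := M ⧸ Submodule.torsion ℤ M
  haveI : Module.Free ℤ N := Module.free_of_finite_type_torsion_free'
  set π : M →ₗ[ℤ] N := (Submodule.torsion ℤ M).mkQ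
  have hmk : π (Additive.ofMul a) ≠ 0 := by
    rw [Submodule.mkQ_apply]
    intro h
    rw [Submodule.Quotient.mk_eq_zero] at h
    obtain ⟨⟨n, hn⟩, hna⟩ := h
    apply ha
    rw [← isOfFinAddOrder_ofMul_iff]
    rw [mem_nonZeroDivisors_iff_ne_zero] at hn
    exact isOfFinAddOrder_iff_zsmul_eq_zero.2 ⟨n, hn, hna⟩
  let b := Module.Free.chooseBasis ℤ N
  have hrepr : b.repr (π (Additive.ofMul a)) ≠ 0 := by
    intro h
    exact hmk (by simpa using congrArg b.repr.symm h)
  obtain ⟨i, hi⟩ : ∃ i, b.repr (π (Additive.ofMul a)) i ≠ 0 := by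
    by_contra h
    push_neg at h
    exact hrepr (Finsupp.ext h)
  exact ⟨((b.coord i).comp π).toAddMonoidHom, hi⟩

/-- If `G` is finitely generated and `x ∈ G` has infinite order in `G^{ab}`, then
`[x,x^φ]²` is an element of infinite order of `Δ̃(G) ≤ ν(G)`. -/
theorem deltaTilde_not_periodic_of_not_periodic_ab {G : Type*} [Group G] [Group.FG G]
    (x : G) (hx : ¬ IsOfFinOrder (Abelianization.of x)) :
    ⁅etaG (conjActions G) x, etaH (conjActions G) x⁆ ^ 2 ∈ deltaTilde G ∧
    ¬ IsOfFinOrder (⁅etaG (conjActions G) x, etaH (conjActions G) x⁆ ^ 2) := by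
  refine ⟨Subgroup.subset_closure
    ⟨x, x, sq ⁅etaG (conjActions G) x, etaH (conjActions G) x⁆⟩, ?_⟩
  -- Build a character χ : G → ℤ, trivial on commutators, with χ x ≠ 0.
  haveI : Group.FG (Abelianization G) :=
    Group.fg_of_surjective (f := Abelianization.of)
      (fun y => Quotient.inductionOn' y fun g => ⟨g, rfl⟩)
  obtain ⟨ψ, hψ⟩ := exists_int_char (Abelianization.of x) hx
  set χ : G → ℤ := fun g => ψ (Additive.ofMul (Abelianization.of g)) with hχ
  have hχmul : ∀ g h : G, χ (g * h) = χ g + χ h := by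
    intro g h
    simp only [hχ, map_mul, ofMul_mul, map_add]
  have hχone : χ 1 = 0 := by
    have := hχmul 1 1
    simpa using this
  have hχinv : ∀ g : G, χ g⁻¹ = -χ g := by
    intro g
    have := hχmul g⁻¹ g
    simp [hχone] at this
    omega
  have hχconj : ∀ g₁ g : G, χ (g₁⁻¹ * g * g₁) = χ g := by
    intro g₁ g
    rw [hχmul, hχmul, hχinv]
    ring
  have hχHG : ∀ g₁ g : G, χ ((conjActions G).aHG g g₁) = χ g := fun g₁ g => hχconj g₁ g
  have hχGH : ∀ h₁ g : G, χ ((conjActions G).aGH g h₁) = χ g := fun h₁ g => hχconj h₁ g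
  -- homomorphisms into the Heisenberg group
  set f₁ : G →* Heis :=
    { toFun := fun g => ⟨χ g, 0, 0⟩
      map_one' := by ext <;> simp [hχone]
      map_mul' := by intro g h; ext <;> simp [hχmul] } with hf₁
  set f₂ : G →* Heis :=
    { toFun := fun g => ⟨0, χ g, 0⟩
      map_one' := by ext <;> simp [hχone]
      map_mul' := by intro g h; ext <;> simp [hχmul] } with hf₂
  set F : Coprod G G →* Heis := Coprod.lift f₁ f₂ with hF
  have hFinl : ∀ g : G, F (Coprod.inl g) = ⟨χ g, 0, 0⟩ := fun g => Coprod.lift_apply_inl f₁ f₂ g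
  have hFinr : ∀ g : G, F (Coprod.inr g) = ⟨0, χ g, 0⟩ := fun g => Coprod.lift_apply_inr f₁ f₂ g
  have hker : Subgroup.normalClosure (etaRels (conjActions G)) ≤ F.ker := by
    refine Subgroup.normalClosure_le_normal ?_
    rintro w (⟨⟨g₁, g, h⟩, rfl⟩ | ⟨⟨h₁, g, h⟩, rfl⟩) <;>
      simp only [SetLike.mem_coe, MonoidHom.mem_ker, map_mul, map_inv, map_commutatorElement,
        hFinl, hFinr]
    · rw [Heis.conjG]
      exact Heis.rel₁_eq _ _ _ _ _ rfl (hχHG g₁ h)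
    · rw [Heis.conjH]
      exact Heis.rel₂_eq _ _ _ _ _ (hχGH h₁ g) rfl
  set Φ : NuGroup G →* Heis :=
    QuotientGroup.lift (Subgroup.normalClosure (etaRels (conjActions G))) F hker with hΦ
  have hΦG : ∀ g : G, Φ (etaG (conjActions G) g) = ⟨χ g, 0, 0⟩ := by
    intro g
    show Φ (QuotientGroup.mk (Coprod.inl g)) = _
    exact (QuotientGroup.lift_mk (φ := F) _ hker (Coprod.inl g)).trans (hFinl g)
  have hΦH : ∀ g : G, Φ (etaH (conjActions G) g) = ⟨0, χ g, 0⟩ := by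
    intro g
    show Φ (QuotientGroup.mk (Coprod.inr g)) = _
    exact (QuotientGroup.lift_mk (φ := F) _ hker (Coprod.inr g)).trans (hFinr g)
  have key : Φ (⁅etaG (conjActions G) x, etaH (conjActions G) x⁆ ^ 2) =
      ⟨0, 0, 2 * (χ x * χ x)⟩ := by
    rw [map_pow, map_commutatorElement, hΦG, hΦH, Heis.comm_eq, Heis.central_pow]
    norm_num
  intro hfin
  have h2 : (2 : ℤ) * (χ x * χ x) ≠ 0 := mul_ne_zero two_ne_zero (mul_ne_zero hψ hψ)
  exact Heis.not_isOfFinOrder h2 (key ▸ Φ.isOfFinOrder hfin)
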